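/- arXiv:1009.4724 — 6 statements merged into one kernel-verified Lean document; each statement's English description precedes it below -/
import Mathlib

section
/- If a finite set M ⊆ ℚ^n is not saturated and contains both a vector v and its negative −v, then at least one of the sets M \ {v} and M \ {−v} is not saturated. -/
/-- `v` is a linear combination of the vectors in `M` with integer coefficients. -/
def memZSpan {n : ℕ} (M : Finset (Fin n → ℚ)) (v : Fin n → ℚ) : Prop :=
  ∃ c : (Fin n → ℚ) → ℤ, v = ∑ w ∈ M, (c w : ℚ) • w

/-- `v` is a linear combination of the vectors in `M` with nonnegative rational coefficients. -/
def memQnnSpan {n : ℕ} (M : Finset (Fin n → ℚ)) (v : Fin n → ℚ) : Prop :=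
  ∃ q : (Fin n → ℚ) → ℚ, (∀ w, 0 ≤ q w) ∧ v = ∑ w ∈ M, q w • w

/-- `v` is a linear combination of the vectors in `M` with nonnegative integer coefficients. -/
def memNSpan {n : ℕ} (M : Finset (Fin n → ℚ)) (v : Fin n → ℚ) : Prop :=
  ∃ a : (Fin n → ℚ) → ℕ, v = ∑ w ∈ M, (a w : ℚ) • w

/-- A finite set `M ⊆ ℚ^n` is saturated if `ℤ≥0(M) = ℤ(M) ∩ ℚ≥0(M)`. -/
def Saturated {n : ℕ} (M : Finset (Fin n → ℚ)) : Prop :=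
  ∀ v : Fin n → ℚ, memZSpan M v → memQnnSpan M v → memNSpan M v

/-!
Suppose `M \ {v}` and `M \ {-v}` are both saturated and `u ∈ ℤ(M) ∩ ℚ≥0(M)`. Since `v` and `-v`
cancel, the coefficient of `-v` can be moved onto `v` (subtracted from it) in any representation
of `u`, and symmetrically. Removing in this way whichever of `v, -v` has the smaller rational
coefficient keeps the rational coefficients nonnegative, so `u ∈ ℤ(M') ∩ ℚ≥0(M') = ℤ≥0(M')`,
which lies in `ℤ≥0(M)`, for `M'` one of `M \ {v}`, `M \ {-v}`.
-/

theorem Finset.sum_smul_eq_sum_erase_neg {R V : Type*} [Field R] [CharZero R]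
    [AddCommGroup V] [Module R V] [DecidableEq V] {s : Finset V} {v : V}
    (hv : v ∈ s) (hnv : -v ∈ s) {f g : V → R} (hg : ∀ w ≠ v, g w = f w)
    (hgv : g v = f v - f (-v)) :
    ∑ w ∈ s, f w • w = ∑ w ∈ s.erase (-v), g w • w := by
  rcases eq_or_ne v 0 with rfl | hv0
  · rw [neg_zero, ← Finset.sum_erase s (f := fun w => f w • w) (smul_zero _)]
    exact Finset.sum_congr rfl fun w hw => by rw [hg w (Finset.ne_of_mem_erase hw)]
  have hne : v ≠ -v := by
    intro h
    have h2v : (2 : R) • v = 0 := by rw [two_smul]; nth_rewrite 2 [h]; exact add_neg_cancel v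
    exact hv0 ((smul_eq_zero.1 h2v).resolve_left two_ne_zero)
  have hv' : v ∈ s.erase (-v) := Finset.mem_erase.2 ⟨hne, hv⟩
  have hrest : ∑ w ∈ (s.erase (-v)).erase v, g w • w = ∑ w ∈ (s.erase (-v)).erase v, f w • w :=
    Finset.sum_congr rfl fun w hw => by rw [hg w (Finset.ne_of_mem_erase hw)]
  rw [← Finset.add_sum_erase s _ hnv, ← Finset.add_sum_erase _ _ hv',
    ← Finset.add_sum_erase _ (fun w => g w • w) hv', hgv, hrest]
  module

variable {n : ℕ} {M : Finset (Fin n → ℚ)} {u v : Fin n → ℚ}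

theorem memNSpan_mono {M' : Finset (Fin n → ℚ)} (hMM' : M ⊆ M') (hu : memNSpan M u) :
    memNSpan M' u := by
  obtain ⟨a, rfl⟩ := hu
  refine ⟨fun w => if w ∈ M then a w else 0, ?_⟩
  rw [← Finset.sum_subset hMM' fun w _ hw => by simp [hw]]
  exact Finset.sum_congr rfl fun w hw => by simp [hw]

theorem memZSpan_erase_neg (hv : v ∈ M) (hnv : -v ∈ M) (hu : memZSpan M u) :
    memZSpan (M.erase (-v)) u := by
  obtain ⟨c, rfl⟩ := hu
  refine ⟨Function.update c v (c v - c (-v)), Finset.sum_smul_eq_sum_erase_neg hv hnv ?_ ?_⟩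
  · intro w hw
    simp [Function.update_of_ne hw]
  · simp

theorem memQnnSpan_erase_neg (hv : v ∈ M) (hnv : -v ∈ M) {q : (Fin n → ℚ) → ℚ}
    (hq : ∀ w, 0 ≤ q w) (hle : q (-v) ≤ q v) (hu : u = ∑ w ∈ M, q w • w) :
    memQnnSpan (M.erase (-v)) u := by
  refine ⟨Function.update q v (q v - q (-v)), fun w => ?_, ?_⟩
  · rcases eq_or_ne w v with rfl | hw
    · simpa using hle
    · simpa [Function.update_of_ne hw] using hq w
  · rw [hu]
    refine Finset.sum_smul_eq_sum_erase_neg hv hnv (fun w hw => ?_) (by simp)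
    exact Function.update_of_ne hw _ _

theorem Saturated.of_erase_of_erase_neg (hv : v ∈ M) (hnv : -v ∈ M)
    (hsat : Saturated (M.erase v)) (hsat_neg : Saturated (M.erase (-v))) : Saturated M := by
  intro u hZ ⟨q, hq, hu⟩
  wlog hle : q (-v) ≤ q v generalizing v
  · rw [← neg_neg v] at hv hsat
    exact this hnv hv hsat_neg hsat (by rw [neg_neg]; linarith)
  exact memNSpan_mono (M.erase_subset _)
    (hsat_neg u (memZSpan_erase_neg hv hnv hZ) (memQnnSpan_erase_neg hv hnv hq hle hu))

/-- If a finite set `M ⊆ ℚ^n` is not saturated and contains both a vector `v` and its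
negative `-v`, then at least one of `M \ {v}` and `M \ {-v}` is not saturated. -/
theorem stmt1 {n : ℕ} (M : Finset (Fin n → ℚ)) (v : Fin n → ℚ)
    (hv : v ∈ M) (hvneg : -v ∈ M) (h : ¬ Saturated M) :
    ¬ Saturated (M.erase v) ∨ ¬ Saturated (M.erase (-v)) := by
  by_contra! hsat
  exact h (Saturated.of_erase_of_erase_neg hv hvneg hsat.1 hsat.2)
end

section
/- If a finite set M = {v1,…,vr} ⊆ ℚ^n is not saturated, then there exists a vector v0 ∈ (ℤ(v1,…,vr) ∩ ℚ≥0(v1,…,vr)) \ ℤ≥0(v1,…,vr) which can be written as v0 = q1·v_{i1} + … + qs·v_{is} for some linearly independent vectors v_{i1},…,v_{is} ∈ M and rational coefficients q_j with 0 ≤ q_j < 1 for each j. -/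
/-!
By Carathéodory's theorem for cones, a witness `v` of non-saturation is a nonnegative combination
`∑ r_w • w` over a linearly independent `S ⊆ M`. Splitting each `r_w` into its integer part and its
fractional part writes `v = v₀ + u` with `u ∈ ℤ≥0(S)` and `v₀` the fractional-part combination.
Then `v₀ = v - u ∈ ℤ(M)`, `v₀ ∈ ℚ≥0(M)`, and `v₀ ∉ ℤ≥0(M)`, since otherwise `v = v₀ + u` would be.
-/

section Caratheodory

variable {𝕜 E : Type*} [Field 𝕜] [LinearOrder 𝕜] [IsStrictOrderedRing 𝕜]
  [AddCommGroup E] [Module 𝕜 E]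

lemma exists_pos_of_not_linearIndepOn {M : Finset E} (hM : ¬ LinearIndepOn 𝕜 id (M : Set E)) :
    ∃ c : E → 𝕜, ∑ w ∈ M, c w • w = 0 ∧ ∃ w ∈ M, 0 < c w := by
  obtain ⟨c, hc, w, hw, hcw⟩ := not_linearIndepOn_finset_iff.1 hM
  simp only [id] at hc
  rcases hcw.lt_or_gt with hneg | hpos
  · exact ⟨-c, by simp [neg_smul, hc], w, hw, by simpa using hneg⟩
  · exact ⟨c, hc, w, hw, hpos⟩

/-- Subtracting the largest multiple `t • c` of a positive dependency `c` that keeps all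
coefficients nonnegative kills the coefficient of some vector `w₀`. -/
lemma exists_nonneg_sum_erase [DecidableEq E] {M : Finset E} {c q : E → 𝕜}
    (hc : ∑ w ∈ M, c w • w = 0) (hpos : ∃ w ∈ M, 0 < c w) (hq : ∀ w ∈ M, 0 ≤ q w) :
    ∃ w₀ ∈ M, ∃ q' : E → 𝕜, (∀ w ∈ M, 0 ≤ q' w) ∧
      ∑ w ∈ M, q w • w = ∑ w ∈ M.erase w₀, q' w • w := by
  obtain ⟨w₁, hw₁, hcw₁⟩ := hpos
  obtain ⟨w₀, hw₀, hmin⟩ := (M.filter fun w => 0 < c w).exists_min_image (fun w => q w / c w)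
    ⟨w₁, Finset.mem_filter.2 ⟨hw₁, hcw₁⟩⟩
  rw [Finset.mem_filter] at hw₀
  set t := q w₀ / c w₀
  have ht : 0 ≤ t := div_nonneg (hq w₀ hw₀.1) hw₀.2.le
  refine ⟨w₀, hw₀.1, fun w => q w - t * c w, fun w hw => ?_, ?_⟩
  · rw [sub_nonneg]
    rcases lt_or_ge 0 (c w) with hcw | hcw
    · calc t * c w ≤ q w / c w * c w :=
            mul_le_mul_of_nonneg_right (hmin w (Finset.mem_filter.2 ⟨hw, hcw⟩)) hcw.le
        _ = q w := div_mul_cancel₀ _ hcw.ne'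
    · exact (mul_nonpos_of_nonneg_of_nonpos ht hcw).trans (hq w hw)
  · have hw₀zero : q w₀ - t * c w₀ = 0 := by rw [div_mul_cancel₀ _ hw₀.2.ne', sub_self]
    rw [Finset.sum_erase _ (by simp only [hw₀zero, zero_smul])]
    simp only [sub_smul, Finset.sum_sub_distrib, mul_smul, ← Finset.smul_sum, hc, smul_zero,
      sub_zero]

/-- Carathéodory's theorem for finitely generated cones. -/
theorem exists_linearIndepOn_subset_nonneg_sum (M : Finset E) (q : E → 𝕜)
    (hq : ∀ w ∈ M, 0 ≤ q w) :
    ∃ S ⊆ M, LinearIndepOn 𝕜 id (S : Set E) ∧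
      ∃ r : E → 𝕜, (∀ w ∈ S, 0 ≤ r w) ∧ ∑ w ∈ M, q w • w = ∑ w ∈ S, r w • w := by
  classical
  induction M using Finset.strongInduction generalizing q with
  | H M ih =>
    by_cases hM : LinearIndepOn 𝕜 id (M : Set E)
    · exact ⟨M, subset_rfl, hM, q, hq, rfl⟩
    obtain ⟨c, hc, hpos⟩ := exists_pos_of_not_linearIndepOn hM
    obtain ⟨w₀, hw₀, q', hq', hsum⟩ := exists_nonneg_sum_erase hc hpos hq
    obtain ⟨S, hS, hSind, r, hr, hsum'⟩ := ih _ (M.erase_ssubset hw₀) q'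
      fun w hw => hq' w (Finset.mem_of_mem_erase hw)
    exact ⟨S, hS.trans (M.erase_subset w₀), hSind, r, hr, hsum.trans hsum'⟩

end Caratheodory

lemma sum_ite_mem_smul_of_subset {R E : Type*} [Semiring R] [AddCommMonoid E] [Module R E]
    [DecidableEq E] {S M : Finset E} (h : S ⊆ M) (f : E → R) :
    ∑ w ∈ M, (if w ∈ S then f w else 0) • w = ∑ w ∈ S, f w • w := by
  simp only [ite_smul, zero_smul, Finset.sum_ite_mem, Finset.inter_eq_right.2 h]

section Spans

variable {n : ℕ} {M S : Finset (Fin n → ℚ)} {v u : Fin n → ℚ}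

lemma memNSpan_sum_of_subset (h : S ⊆ M) (a : (Fin n → ℚ) → ℕ) :
    memNSpan M (∑ w ∈ S, (a w : ℚ) • w) := by
  classical
  refine ⟨fun w => if w ∈ S then a w else 0, ?_⟩
  push_cast
  exact (sum_ite_mem_smul_of_subset h _).symm

lemma memQnnSpan_sum_of_subset (h : S ⊆ M) {q : (Fin n → ℚ) → ℚ} (hq : ∀ w ∈ S, 0 ≤ q w) :
    memQnnSpan M (∑ w ∈ S, q w • w) := by
  classical
  refine ⟨fun w => if w ∈ S then q w else 0, fun w => ?_, (sum_ite_mem_smul_of_subset h _).symm⟩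
  by_cases hw : w ∈ S
  · simpa [hw] using hq w hw
  · simp [hw]

lemma memNSpan.memZSpan (hv : memNSpan M v) : memZSpan M v := by
  obtain ⟨a, rfl⟩ := hv
  exact ⟨fun w => a w, by simp⟩

lemma memNSpan.add (hv : memNSpan M v) (hu : memNSpan M u) : memNSpan M (v + u) := by
  obtain ⟨a, rfl⟩ := hv
  obtain ⟨b, rfl⟩ := hu
  exact ⟨a + b, by simp only [Pi.add_apply, Nat.cast_add, add_smul, Finset.sum_add_distrib]⟩

lemma memZSpan.sub (hv : memZSpan M v) (hu : memZSpan M u) : memZSpan M (v - u) := by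
  obtain ⟨a, rfl⟩ := hv
  obtain ⟨b, rfl⟩ := hu
  exact ⟨a - b, by simp only [Pi.sub_apply, Int.cast_sub, sub_smul, Finset.sum_sub_distrib]⟩

end Spans

/-- If a finite set `M = {v1,…,vr} ⊆ ℚ^n` is not saturated, then there exists a vector
`v0 ∈ (ℤ(M) ∩ ℚ≥0(M)) \ ℤ≥0(M)` which is a linear combination, with rational
coefficients in `[0,1)`, of some linearly independent subset of `M`. -/
theorem stmt2 {n : ℕ} (M : Finset (Fin n → ℚ)) (h : ¬ Saturated M) :
    ∃ v0 : Fin n → ℚ, memZSpan M v0 ∧ memQnnSpan M v0 ∧ ¬ memNSpan M v0 ∧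
      ∃ S : Finset (Fin n → ℚ), S ⊆ M ∧
        LinearIndependent ℚ (fun w : S => (w : Fin n → ℚ)) ∧
        ∃ q : (Fin n → ℚ) → ℚ, (∀ w ∈ S, 0 ≤ q w ∧ q w < 1) ∧
          v0 = ∑ w ∈ S, q w • w := by
  simp only [Saturated, not_forall] at h
  obtain ⟨v, hZ, ⟨q, hq, rfl⟩, hN⟩ := h
  obtain ⟨S, hSM, hS, r, hr, hv⟩ :=
    exists_linearIndepOn_subset_nonneg_sum M q fun w _ => hq w
  set frac : (Fin n → ℚ) → ℚ := fun w => r w - ⌊r w⌋₊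
  have hfrac : ∀ w ∈ S, 0 ≤ frac w ∧ frac w < 1 := fun w hw =>
    ⟨sub_nonneg.2 (Nat.floor_le (hr w hw)), by linarith [Nat.lt_floor_add_one (r w)]⟩
  have hu := memNSpan_sum_of_subset hSM fun w => ⌊r w⌋₊
  have hsplit : ∑ w ∈ S, r w • w = ∑ w ∈ S, frac w • w + ∑ w ∈ S, (⌊r w⌋₊ : ℚ) • w := by
    simp only [frac, ← Finset.sum_add_distrib, ← add_smul, sub_add_cancel]
  refine ⟨_, ?_, memQnnSpan_sum_of_subset hSM fun w hw => (hfrac w hw).1, fun hN' => ?_,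
    S, hSM, hS, frac, hfrac, rfl⟩
  · rw [eq_sub_of_add_eq hsplit.symm, ← hv]
    exact hZ.sub hu.memZSpan
  · exact hN (hv ▸ hsplit ▸ hN'.add hu)
end

section
/- Every unimodular finite set of vectors in ℚ^n is hereditarily normal, i.e., every subset of a unimodular set is saturated. -/
/-- The determinant of a `d`-tuple of vectors from `M`, computed with respect to a fixed
basis `b` of the linear span of `M`. -/
noncomputable def detT {n d : ℕ} (M : Finset (Fin n → ℚ))
    (b : Module.Basis (Fin d) ℚ (Submodule.span ℚ (M : Set (Fin n → ℚ))))
    (w : Fin d → M) : ℚ :=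
  Matrix.det (Matrix.of fun i j =>
    b.repr ⟨(w i : Fin n → ℚ), Submodule.subset_span (Finset.mem_coe.mpr (w i).2)⟩ j)

/-!
Carathéodory's theorem for cones writes a point of `ℚ≥0(S) ∩ ℤ(S)` as a nonnegative combination
of a linearly independent subset `T ⊆ S`. Extend `T` to a basis `B ⊆ M` of the span of `M`. By
Cramer's rule, the `B`-coordinate of `m ∈ M` at `β` is `det(B with β replaced by m) / det B`, which
unimodularity forces into `{-1, 0, 1}`. Hence the coordinate functionals of `B` are integral on `M`,
so on `ℤ(S)`, and on `T` they read off the coefficients of the Carathéodory combination.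
-/

open Module Function Submodule

section Caratheodory

variable {K E : Type*} [Field K] [LinearOrder K] [IsStrictOrderedRing K]
  [AddCommGroup E] [Module K E] [DecidableEq E]

theorem exists_mem_nonneg_sum_erase_eq_of_not_linearIndepOn {s : Finset E}
    (hs : ¬LinearIndepOn K id (s : Set E)) {f : E → K} (hf : ∀ i ∈ s, 0 ≤ f i) :
    ∃ y ∈ s, ∃ g : E → K, (∀ i ∈ s.erase y, 0 ≤ g i) ∧
      ∑ i ∈ s.erase y, g i • i = ∑ i ∈ s, f i • i := by
  obtain ⟨r₀, hr₀, j, hj, hrj⟩ := not_linearIndepOn_finset_iff.mp hs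
  -- rescale the relation so that it has a positive coefficient
  set r : E → K := fun i => (r₀ j)⁻¹ * r₀ i with hr_def
  have hr : ∑ i ∈ s, r i • i = 0 := by
    simp only [hr_def, mul_smul, ← Finset.smul_sum, id] at hr₀ ⊢
    rw [hr₀, smul_zero]
  obtain ⟨y, hy, hmin⟩ := (s.filter (0 < r ·)).exists_min_image (fun i => f i / r i)
    ⟨j, Finset.mem_filter.mpr ⟨hj, by simp [hr_def, hrj]⟩⟩
  obtain ⟨hys, hry⟩ := Finset.mem_filter.mp hy
  -- the largest multiple of the relation that can be subtracted from `f` staying nonnegative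
  set l := f y / r y
  have hl : 0 ≤ l := div_nonneg (hf y hys) hry.le
  refine ⟨y, hys, fun i => f i - l * r i, fun i hi => ?_, ?_⟩
  · have his := Finset.mem_of_mem_erase hi
    rcases lt_or_ge 0 (r i) with hri | hri
    · have := hmin i (Finset.mem_filter.mpr ⟨his, hri⟩)
      rw [le_div_iff₀ hri] at this
      linarith
    · nlinarith [hf i his]
  · rw [Finset.sum_erase _ (by simp [l, hry.ne'])]
    simp only [sub_smul, Finset.sum_sub_distrib, mul_smul, ← Finset.smul_sum, hr, smul_zero,
      sub_zero]

theorem exists_linearIndepOn_subset_nonneg_sum_eq (s : Finset E) {f : E → K}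
    (hf : ∀ i ∈ s, 0 ≤ f i) :
    ∃ t ⊆ s, LinearIndepOn K id (t : Set E) ∧
      ∃ g : E → K, (∀ i ∈ t, 0 ≤ g i) ∧ ∑ i ∈ t, g i • i = ∑ i ∈ s, f i • i := by
  induction s using Finset.strongInduction generalizing f with
  | H s ih =>
  by_cases hs : LinearIndepOn K id (s : Set E)
  · exact ⟨s, subset_rfl, hs, f, hf, rfl⟩
  obtain ⟨y, hy, g, hg, hsum⟩ := exists_mem_nonneg_sum_erase_eq_of_not_linearIndepOn hs hf
  obtain ⟨t, hts, ht, h, hh, htsum⟩ := ih _ (s.erase_ssubset hy) hg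
  exact ⟨t, hts.trans (s.erase_subset y), ht, h, hh, htsum.trans hsum⟩

end Caratheodory

namespace Module.Basis

theorem det_update_eq_repr_mul_det {ι R V : Type*} [Fintype ι] [DecidableEq ι] [CommRing R]
    [AddCommGroup V] [Module R V] (b e : Basis ι R V) (i : ι) (m : V) :
    b.det (update e i m) = e.repr m i * b.det e := by
  have h := congr($(b.det_smul_mk_coord_eq_det_update e.linearIndependent e.span_eq.ge i) m)
  rw [show Basis.mk e.linearIndependent e.span_eq.ge = e from
    Basis.eq_of_apply_eq fun _ => Basis.mk_apply ..] at h
  simpa [mul_comm] using h.symm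

variable {ι K V W : Type*} [Fintype ι] [DecidableEq ι] [Field K] [LinearOrder K]
  [AddCommGroup V] [Module K V] [AddCommGroup W] [Module K W]

def IsUnimodular (b : Basis ι K V) (N : Set V) : Prop :=
  ∃ c : K, ∀ w : ι → V, (∀ i, w i ∈ N) → b.det w = 0 ∨ |b.det w| = c

theorem IsUnimodular.reindex {b : Basis ι K V} {N : Set V} (hb : b.IsUnimodular N)
    {κ : Type*} [Fintype κ] [DecidableEq κ] (σ : ι ≃ κ) : (b.reindex σ).IsUnimodular N := by
  obtain ⟨c, hc⟩ := hb
  exact ⟨c, fun w hw => by simpa only [det_reindex] using hc (w ∘ σ) fun i => hw (σ i)⟩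

variable [IsStrictOrderedRing K]

theorem IsUnimodular.repr_mem_range_intCast {b : Basis ι K V} {N : Set V}
    (hb : b.IsUnimodular N) (e : Basis ι K V) (he : ∀ i, e i ∈ N) {m : V} (hm : m ∈ N)
    (i : ι) : e.repr m i ∈ (Int.castRingHom K).range := by
  obtain ⟨c, hc⟩ := hb
  have hdet : b.det e ≠ 0 := (b.isUnit_det e).ne_zero
  have hupdate : ∀ j, update e i m j ∈ N := fun j => by
    rcases eq_or_ne j i with rfl | hj
    · simpa using hm
    · simpa [hj] using he j
  rcases hc e he with h | hce
  · exact absurd h hdet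
  rcases hc _ hupdate with h | h <;> rw [det_update_eq_repr_mul_det] at h
  · rw [(mul_eq_zero.mp h).resolve_right hdet]
    exact zero_mem _
  · rw [abs_mul, ← hce, mul_eq_right₀ (abs_ne_zero.mpr hdet)] at h
    rcases abs_eq_abs.mp (h.trans abs_one.symm) with h | h <;> rw [h]
    · exact one_mem _
    · exact neg_mem (one_mem _)

theorem IsUnimodular.exists_dual_of_linearIndepOn {b : Basis ι K V} {N : Set V}
    (hb : b.IsUnimodular N) (hN : span K N = ⊤) {T : Set V} (hTN : T ⊆ N)
    (hT : LinearIndepOn K id T) {t : V} (ht : t ∈ T) :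
    ∃ φ : V →ₗ[K] K, φ t = 1 ∧ (∀ s ∈ T, s ≠ t → φ s = 0) ∧
      ∀ m ∈ N, φ m ∈ (Int.castRingHom K).range := by
  classical
  obtain ⟨B, hBN, hTB, hNB, hB⟩ := exists_linearIndepOn_id_extension hT hTN
  let e : Basis B K V := Basis.mk hB (by rw [← hN, span_le]; simpa using hNB)
  have : Module.Finite K V := .of_basis b
  have : Finite B := Module.Finite.finite_basis e
  have : Fintype B := .ofFinite B
  have he : ∀ i, e i ∈ N := fun i => by simpa [e] using hBN i.2
  refine ⟨e.coord ⟨t, hTB ht⟩, mk_coord_apply_eq _, fun s hs hst => ?_, fun m hm =>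
    (hb.reindex (b.indexEquiv e)).repr_mem_range_intCast e he hm _⟩
  exact mk_coord_apply_ne (v := fun x : B => id (x : V)) (i := ⟨t, hTB ht⟩) (j := ⟨s, hTB hs⟩)
    (by simpa using hst)

theorem IsUnimodular.exists_dual_of_linearIndepOn_span {M : Set W}
    {b : Basis ι K (span K M)} (hb : b.IsUnimodular ((↑) ⁻¹' M)) {T : Set W} (hTM : T ⊆ M)
    (hT : LinearIndepOn K id T) {t : W} (ht : t ∈ T) :
    ∃ φ : W →ₗ[K] K, φ t = 1 ∧ (∀ s ∈ T, s ≠ t → φ s = 0) ∧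
      ∀ m ∈ M, φ m ∈ (Int.castRingHom K).range := by
  have hTV : LinearIndepOn K id ((↑) ⁻¹' T : Set (span K M)) := by
    have : LinearIndepOn K ((↑) : span K M → W) ((↑) ⁻¹' T) := by
      refine (linearIndepOn_iff_image Subtype.val_injective.injOn).mpr ?_
      rwa [Set.image_preimage_eq_of_subset (by simpa using hTM.trans subset_span)]
    exact this.of_comp (span K M).subtype
  obtain ⟨φ, hφt, hφT, hφM⟩ := hb.exists_dual_of_linearIndepOn span_span_coe_preimage
    (Set.preimage_mono hTM) hTV (t := ⟨t, subset_span (hTM ht)⟩) ht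
  obtain ⟨ψ, hψ⟩ := LinearMap.exists_extend φ
  have hψφ (x : span K M) : ψ x = φ x := LinearMap.congr_fun hψ x
  refine ⟨ψ, (hψφ _).trans hφt, fun s hs hst => ?_, fun m hm => ?_⟩
  · exact (hψφ ⟨s, subset_span (hTM hs)⟩).trans (hφT _ hs (by simpa using hst))
  · exact (hψφ ⟨m, subset_span hm⟩).symm ▸ hφM _ hm

theorem IsUnimodular.coeff_mem_range_intCast {M : Set W} {b : Basis ι K (span K M)}
    (hb : b.IsUnimodular ((↑) ⁻¹' M)) {S T : Finset W} (hSM : ↑S ⊆ M) (hTS : T ⊆ S)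
    (hT : LinearIndepOn K id (T : Set W)) {z : W → ℤ} {r : W → K}
    (h : ∑ t ∈ T, r t • t = ∑ s ∈ S, (z s : K) • s) {t : W} (ht : t ∈ T) :
    r t ∈ (Int.castRingHom K).range := by
  obtain ⟨φ, hφt, hφT, hφM⟩ :=
    hb.exists_dual_of_linearIndepOn_span (fun s hs => hSM (hTS hs)) hT ht
  have hcoeff : φ (∑ s ∈ T, r s • s) = r t := by
    rw [map_sum, Finset.sum_eq_single t (fun s hs hst => by simp [hφT s hs hst]) (absurd ht)]
    simp [hφt]
  rw [← hcoeff, h, map_sum]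
  exact Subring.sum_mem _ fun s hs => by
    simpa only [map_smul, smul_eq_mul] using mul_mem (intCast_mem _ _) (hφM s (hSM hs))

end Module.Basis

theorem detT_eq_det {n d : ℕ} (M : Finset (Fin n → ℚ))
    (b : Basis (Fin d) ℚ (span ℚ (M : Set (Fin n → ℚ)))) (w : Fin d → M) :
    detT M b w = b.det fun i => ⟨w i, subset_span (w i).2⟩ := by
  rw [Basis.det_apply, detT, ← Matrix.det_transpose]
  rfl

theorem memNSpan_sum_of_natCast {n : ℕ} {S T : Finset (Fin n → ℚ)} (hTS : T ⊆ S)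
    {r : (Fin n → ℚ) → ℚ} (hr : ∀ t ∈ T, ∃ k : ℕ, (k : ℚ) = r t) :
    memNSpan S (∑ t ∈ T, r t • t) := by
  classical
  refine ⟨fun w => if w ∈ T then ⌊r w⌋₊ else 0, ?_⟩
  rw [← Finset.sum_subset hTS fun w _ hw => by simp [hw]]
  refine Finset.sum_congr rfl fun t ht => ?_
  obtain ⟨k, hk⟩ := hr t ht
  simp [ht, ← hk]

/-- Every unimodular finite set of vectors in `ℚ^n` is hereditarily normal: if all nonzero
determinants of `d`-tuples of vectors of `M` (computed in a fixed basis of the linear span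
of `M`, whose dimension is `d`) have the same absolute value, then every subset of `M`
is saturated. -/
theorem stmt3 {n d : ℕ} (M : Finset (Fin n → ℚ))
    (b : Module.Basis (Fin d) ℚ (Submodule.span ℚ (M : Set (Fin n → ℚ))))
    (c : ℚ)
    (huni : ∀ w : Fin d → M, detT M b w = 0 ∨ |detT M b w| = c) :
    ∀ S ⊆ M, Saturated S := by
  have hb : b.IsUnimodular ((↑) ⁻¹' (M : Set (Fin n → ℚ))) :=
    ⟨c, fun w hw => by simpa only [detT_eq_det] using huni fun i => ⟨w i, hw i⟩⟩
  rintro S hSM v ⟨z, hz⟩ ⟨q, hq, hqv⟩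
  obtain ⟨T, hTS, hT, r, hr, hrv⟩ :=
    exists_linearIndepOn_subset_nonneg_sum_eq S fun i _ => hq i
  rw [hqv, ← hrv]
  refine memNSpan_sum_of_natCast hTS fun t ht => ?_
  obtain ⟨k, hk⟩ := hb.coeff_mem_range_intCast (Finset.coe_subset.mpr hSM) hTS hT
    (hrv.trans (hqv.symm.trans hz)) ht
  lift k to ℕ using by simpa [← hk] using hr t ht
  exact ⟨k, by simpa using hk⟩
end

section
/- Let M ⊆ ℚ^n be an almost unimodular set of rank d and volume m, and let {v1,…,vd} ⊆ M be a primitive subset (i.e., det(v1,…,vd) = ±m). Then every vector of M is an integer linear combination of v1,…,vd, i.e., M ⊆ ℤ(v1,…,vd). -/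
/-!
Since `det(v₁, …, v_d) = ±m ≠ 0`, the `vᵢ` form a basis of the span of `M`, and by Cramer's rule
the `i`-th coordinate of `u ∈ M` in this basis is `det(v₁, …, u, …, v_d) / det(v₁, …, v_d)`, with
`u` in the `i`-th slot. The numerator is an integer multiple of `m` and the denominator is `±m`.
That `m ≠ 0` holds because `M` spans, so some `d`-tuple from `M` has nonzero determinant.
-/

open Submodule Function

theorem MultilinearMap.eq_zero_of_span_eq_top {R ι M₂ : Type*} {M₁ : ι → Type*} [CommSemiring R]
    [∀ i, AddCommMonoid (M₁ i)] [AddCommMonoid M₂] [∀ i, Module R (M₁ i)] [Module R M₂]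
    [Finite ι] (f : MultilinearMap R M₁ M₂) {s : ∀ i, Set (M₁ i)}
    (hs : ∀ i, span R (s i) = ⊤) (hf : ∀ w, (∀ i, w i ∈ s i) → f w = 0) : f = 0 := by
  classical
  have : Fintype ι := Fintype.ofFinite ι
  suffices h : ∀ T : Finset ι, ∀ w, (∀ i ∉ T, w i ∈ s i) → f w = 0 from
    ext fun w => h Finset.univ w (by simp)
  intro T
  induction T using Finset.induction_on with
  | empty => exact fun w hw => hf w fun i => hw i (Finset.notMem_empty i)
  | insert j T _ ih =>
    intro w hw
    -- the slice through `w` in direction `j` is linear and vanishes on the spanning set `s j`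
    have hslice : f.toLinearMap w j = 0 := LinearMap.ext_on (hs j) fun x hx => by
      refine ih _ fun i hi => ?_
      rcases eq_or_ne i j with rfl | hij
      · simpa using hx
      · simpa [hij] using hw i (by simp [hij, hi])
    simpa using congr($hslice (w j))

theorem Module.Basis.exists_det_ne_zero_of_span_eq_top {R ι V : Type*} [CommRing R] [Nontrivial R]
    [AddCommGroup V] [Module R V] [Fintype ι] [DecidableEq ι] (e : Basis ι R V) {s : Set V}
    (hs : span R s = ⊤) : ∃ w : ι → V, (∀ i, w i ∈ s) ∧ e.det w ≠ 0 := by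
  by_contra! h
  refine e.det_ne_zero (AlternatingMap.coe_multilinearMap_injective ?_)
  exact e.det.toMultilinearMap.eq_zero_of_span_eq_top (fun _ => hs) h

theorem Module.Basis.exists_int_coeffs_of_det_update {K ι V : Type*} [Field K] [AddCommGroup V]
    [Module K V] [Fintype ι] [DecidableEq ι] (e : Basis ι K V) {v : ι → V} (hv : e.det v ≠ 0)
    (w : V) (hw : ∀ i, ∃ z : ℤ, e.det (update v i w) = z * e.det v) :
    ∃ c : ι → ℤ, w = ∑ i, (c i : K) • v i := by
  obtain ⟨hli, hsp⟩ := e.is_basis_iff_det.2 (isUnit_iff_ne_zero.2 hv)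
  choose z hz using hw
  refine ⟨z, ?_⟩
  set B := Basis.mk hli hsp.ge
  have hcoord : ∀ i, B.repr w i = z i := fun i => by
    have := congr($(e.det_smul_mk_coord_eq_det_update hli hsp.ge i) w)
    simp only [LinearMap.smul_apply, Basis.coord_apply, smul_eq_mul,
      MultilinearMap.toLinearMap_apply, AlternatingMap.coe_multilinearMap, hz i] at this
    exact mul_left_cancel₀ hv (this.trans (mul_comm _ _))
  calc w = ∑ i, B.repr w i • B i := (B.sum_repr w).symm
    _ = _ := Finset.sum_congr rfl fun i _ => by rw [hcoord, Basis.mk_apply]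

def toSpan {n : ℕ} (M : Finset (Fin n → ℚ)) (x : M) : span ℚ (M : Set (Fin n → ℚ)) :=
  ⟨x, subset_span x.2⟩

theorem detT_eq_basis_det {n d : ℕ} (M : Finset (Fin n → ℚ))
    (b : Module.Basis (Fin d) ℚ (span ℚ (M : Set (Fin n → ℚ)))) (w : Fin d → M) :
    detT M b w = b.det (toSpan M ∘ w) := by
  rw [Module.Basis.det_apply, ← Matrix.det_transpose]
  rfl

theorem stmt5_general {n d : ℕ} (M : Finset (Fin n → ℚ))
    (b : Module.Basis (Fin d) ℚ (Submodule.span ℚ (M : Set (Fin n → ℚ))))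
    (m : ℚ)
    (hint : ∀ w : Fin d → M, ∃ z : ℤ, detT M b w = (z : ℚ) * m)
    (v : Fin d → M) (hprim : detT M b v = m ∨ detT M b v = -m) :
    ∀ u ∈ M, ∃ c : Fin d → ℤ, u = ∑ i, (c i : ℚ) • (v i : Fin n → ℚ) := by
  intro u hu
  have hm : m ≠ 0 := by
    obtain ⟨w, hwM, hw⟩ := b.exists_det_ne_zero_of_span_eq_top (span_span_coe_preimage (R := ℚ))
    obtain ⟨z, hz⟩ := hint fun i => ⟨w i, hwM i⟩
    rw [detT_eq_basis_det] at hz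
    exact right_ne_zero_of_mul (hz ▸ hw)
  obtain ⟨ε, hv⟩ : ∃ ε : ℤ, m = ε * detT M b v := by
    rcases hprim with h | h
    · exact ⟨1, by simp [h]⟩
    · exact ⟨-1, by simp [h]⟩
  rw [detT_eq_basis_det] at hv
  have hupdate : ∀ i, ∃ z : ℤ, b.det (update (toSpan M ∘ v) i (toSpan M ⟨u, hu⟩)) =
      z * b.det (toSpan M ∘ v) := fun i => by
    obtain ⟨z, hz⟩ := hint (update v i ⟨u, hu⟩)
    rw [detT_eq_basis_det, comp_update, hv] at hz
    exact ⟨z * ε, by rw [hz]; push_cast; ring⟩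
  obtain ⟨c, hc⟩ := b.exists_int_coeffs_of_det_update
    (fun h => hm (by rw [hv, h, mul_zero])) _ hupdate
  exact ⟨c, by simpa [toSpan] using congr(Subtype.val $hc)⟩

/-- Let `M ⊆ ℚ^n` be an almost unimodular set of rank `d` and volume `m`, and let
`{v1,…,vd} ⊆ M` be a primitive subset (i.e. `det(v1,…,vd) = ±m`). Then every vector of `M`
is an integer linear combination of `v1,…,vd`. -/
theorem stmt5 {n d : ℕ} (M : Finset (Fin n → ℚ))
    (b : Module.Basis (Fin d) ℚ (Submodule.span ℚ (M : Set (Fin n → ℚ))))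
    (m : ℚ)
    (hint : ∀ w : Fin d → M, ∃ z : ℤ, detT M b w = (z : ℚ) * m)
    (hvol : ∃ w : Fin d → M, detT M b w = m)
    (v : Fin d → M) (hprim : detT M b v = m ∨ detT M b v = -m) :
    ∀ u ∈ M, ∃ c : Fin d → ℤ, u = ∑ i, (c i : ℚ) • (v i : Fin n → ℚ) :=
  stmt5_general M b m hint v hprim
end

section
/- Let n ≥ 3 and let λ = (ℓ1,…,ℓn) ∈ ℤ^n satisfy ℓ1 ≥ ℓ2 ≥ … ≥ ℓn ≥ 0 and ℓ1 + … + ℓn ≥ 2. Then the vector e1 + e2 belongs to the convex hull of the orbit of λ under the group of all signed permutations of the coordinates, i.e., e1 + e2 ∈ conv{(ε1·ℓ_{σ(1)}, …, εn·ℓ_{σ(n)}) : σ a permutation of {1,…,n}, εi ∈ {±1}}. -/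
/-!
The convex hull of a signed-permutation orbit is invariant under signed permutations. Averaging a
point with its sign flip at `j` zeroes the `j`-th coordinate, and averaging with a transposition
equalizes two coordinates. Starting from `λ` this yields `0` and `((ℓ₁ + ℓ₂) / 2) • (e₁ + e₂)` in
the hull, and since `ℓ₁ + ℓ₂ ≥ 2` (by monotonicity, from `∑ ℓᵢ ≥ 2`), `e₁ + e₂` lies on the
segment between them.
-/

open Set Finset

section SignedPermutations

variable {𝕜 ι : Type*} [Field 𝕜]

def signedPermOrbit (l : ι → 𝕜) : Set (ι → 𝕜) :=
  {x | ∃ σ : Equiv.Perm ι, ∃ ε : ι → 𝕜, (∀ i, ε i = 1 ∨ ε i = -1) ∧ x = fun i => ε i * l (σ i)}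

def signedPermMap (δ : ι → 𝕜) (π : Equiv.Perm ι) : (ι → 𝕜) →ₗ[𝕜] ι → 𝕜 :=
  LinearMap.pi fun i => δ i • LinearMap.proj (π i)

@[simp]
theorem signedPermMap_apply (δ : ι → 𝕜) (π : Equiv.Perm ι) (x : ι → 𝕜) (i : ι) :
    signedPermMap δ π x i = δ i * x (π i) := rfl

theorem self_mem_signedPermOrbit (l : ι → 𝕜) : l ∈ signedPermOrbit l :=
  ⟨1, 1, fun _ => Or.inl rfl, by ext; simp⟩

theorem mapsTo_signedPermMap_signedPermOrbit {δ : ι → 𝕜} (hδ : ∀ i, δ i = 1 ∨ δ i = -1)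
    (π : Equiv.Perm ι) (l : ι → 𝕜) :
    MapsTo (signedPermMap δ π) (signedPermOrbit l) (signedPermOrbit l) := by
  rintro _ ⟨σ, ε, hε, rfl⟩
  refine ⟨π.trans σ, fun i => δ i * ε (π i), fun i => ?_, by ext; simp [mul_assoc]⟩
  rcases hδ i with h | h <;> rcases hε (π i) with h' | h' <;> simp [h, h']

variable [LinearOrder 𝕜]

theorem signedPermMap_mem_convexHull {δ : ι → 𝕜} (hδ : ∀ i, δ i = 1 ∨ δ i = -1)
    (π : Equiv.Perm ι) {l x : ι → 𝕜} (hx : x ∈ convexHull 𝕜 (signedPermOrbit l)) :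
    signedPermMap δ π x ∈ convexHull 𝕜 (signedPermOrbit l) := by
  have := (signedPermMap δ π).image_convexHull (signedPermOrbit l) ▸ mem_image_of_mem _ hx
  exact convexHull_mono (mapsTo_signedPermMap_signedPermOrbit hδ π l).image_subset this

variable [IsStrictOrderedRing 𝕜] [DecidableEq ι]

theorem update_zero_mem_convexHull {l x : ι → 𝕜} (hx : x ∈ convexHull 𝕜 (signedPermOrbit l))
    (j : ι) : Function.update x j 0 ∈ convexHull 𝕜 (signedPermOrbit l) := by
  set δ : ι → 𝕜 := fun i => if i = j then -1 else 1
  have hδ : ∀ i, δ i = 1 ∨ δ i = -1 := fun i => by by_cases h : i = j <;> simp [δ, h]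
  have hmid : Function.update x j 0 = (1 / 2 : 𝕜) • x + (1 / 2 : 𝕜) • signedPermMap δ 1 x := by
    ext i
    by_cases h : i = j <;> simp [δ, h]; ring
  rw [hmid]
  exact convex_convexHull 𝕜 _ hx (signedPermMap_mem_convexHull hδ 1 hx)
    (by norm_num) (by norm_num) (by norm_num)

theorem piecewise_zero_mem_convexHull {l x : ι → 𝕜} (hx : x ∈ convexHull 𝕜 (signedPermOrbit l))
    (s : Finset ι) : s.piecewise (0 : ι → 𝕜) x ∈ convexHull 𝕜 (signedPermOrbit l) := by
  induction s using Finset.induction_on with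
  | empty => simpa using hx
  | insert j s _ ih => simpa [Finset.piecewise_insert] using update_zero_mem_convexHull ih j

theorem zero_mem_convexHull_signedPermOrbit [Fintype ι] (l : ι → 𝕜) :
    (0 : ι → 𝕜) ∈ convexHull 𝕜 (signedPermOrbit l) := by
  simpa using
    piecewise_zero_mem_convexHull (subset_convexHull 𝕜 _ (self_mem_signedPermOrbit l)) univ

theorem smul_single_add_single_mem_convexHull [Fintype ι] {l x : ι → 𝕜}
    (hx : x ∈ convexHull 𝕜 (signedPermOrbit l)) {a b : ι} (hab : a ≠ b) :
    ((x a + x b) / 2) • (Pi.single a 1 + Pi.single b 1 : ι → 𝕜) ∈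
      convexHull 𝕜 (signedPermOrbit l) := by
  set q := ({a, b}ᶜ : Finset ι).piecewise (0 : ι → 𝕜) x
  have hq := piecewise_zero_mem_convexHull hx ({a, b}ᶜ : Finset ι)
  have hmid : ((x a + x b) / 2) • (Pi.single a 1 + Pi.single b 1 : ι → 𝕜) =
      (1 / 2 : 𝕜) • q + (1 / 2 : 𝕜) • signedPermMap 1 (Equiv.swap a b) q := by
    ext i
    by_cases ha : i = a
    · subst ha; simp [q, hab, Finset.piecewise]; ring
    by_cases hb : i = b
    · subst hb; simp [q, hab, Finset.piecewise, Ne.symm hab]; ring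
    simp [q, ha, hb, Finset.piecewise, Equiv.swap_apply_of_ne_of_ne ha hb]
  rw [hmid]
  exact convex_convexHull 𝕜 _ hq (signedPermMap_mem_convexHull (fun _ => Or.inl rfl) _ hq)
    (by norm_num) (by norm_num) (by norm_num)

end SignedPermutations

theorem two_le_add_of_antitone {n : ℕ} {l : Fin (n + 2) → ℤ} (hl : Antitone l)
    (hl0 : ∀ i, 0 ≤ l i) (hsum : 2 ≤ ∑ i, l i) : 2 ≤ l 0 + l 1 := by
  by_cases h1 : 1 ≤ l 1
  · linarith [hl (Fin.zero_le 1)]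
  have h1 : l 1 ≤ 0 := by omega
  have htail : ∑ i : Fin (n + 1), l i.succ ≤ 0 := Finset.sum_nonpos fun i _ =>
    (hl (Fin.succ_le_succ_iff.mpr (Fin.zero_le i))).trans (by simpa using h1)
  rw [Fin.sum_univ_succ] at hsum
  linarith [hl0 1]

/-- Let `n ≥ 3` and let `λ = (ℓ1,…,ℓn) ∈ ℤ^n` satisfy `ℓ1 ≥ ℓ2 ≥ … ≥ ℓn ≥ 0` and
`ℓ1 + … + ℓn ≥ 2`. Then `e1 + e2` belongs to the convex hull (in `ℚ^n`) of the orbit of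
`λ` under the group of all signed permutations of the coordinates. -/
theorem stmt10 {n : ℕ} (hn : 3 ≤ n) (l : Fin n → ℤ)
    (hmono : ∀ i j : Fin n, i ≤ j → l j ≤ l i) (hnonneg : ∀ i, 0 ≤ l i)
    (hsum : 2 ≤ ∑ i, l i) :
    (fun i : Fin n => if (i : ℕ) < 2 then (1 : ℚ) else 0) ∈
      convexHull ℚ {x : Fin n → ℚ | ∃ σ : Equiv.Perm (Fin n), ∃ ε : Fin n → ℚ,
        (∀ i, ε i = 1 ∨ ε i = -1) ∧ x = fun i => ε i * (l (σ i) : ℚ)} := by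
  obtain ⟨k, rfl⟩ : ∃ k, n = k + 2 := ⟨n - 2, by omega⟩
  have hm : (2 : ℚ) ≤ l 0 + l 1 := by exact_mod_cast two_le_add_of_antitone hmono hnonneg hsum
  set x : Fin (k + 2) → ℚ := fun i => (l i : ℚ)
  change _ ∈ convexHull ℚ (signedPermOrbit x)
  set m := x 0 + x 1
  have hu : (m / 2) • (Pi.single 0 1 + Pi.single 1 1 : Fin (k + 2) → ℚ) ∈
      convexHull ℚ (signedPermOrbit x) :=
    smul_single_add_single_mem_convexHull (subset_convexHull ℚ _ (self_mem_signedPermOrbit x))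
      (by simp)
  have he : (fun i : Fin (k + 2) => if (i : ℕ) < 2 then (1 : ℚ) else 0) =
      (2 / m) • (m / 2) • (Pi.single 0 1 + Pi.single 1 1 : Fin (k + 2) → ℚ) := by
    rw [smul_smul, div_mul_div_comm, mul_comm, div_self (by positivity), one_smul]
    ext ⟨_ | _ | i, hi⟩ <;> simp [Fin.ext_iff]
  rw [he]
  exact (convex_convexHull ℚ _).smul_mem_of_zero_mem (zero_mem_convexHull_signedPermOrbit x) hu
    ⟨by positivity, (div_le_one (by positivity)).mpr hm⟩
end

section
/- Let n ≥ 4 and let λ = (ℓ1,…,ℓn) ∈ ℚ^n be such that each 2ℓi is an odd integer, ℓ1 ≥ ℓ2 ≥ … ≥ ℓ_{n−1} ≥ |ℓn|, and ℓ1 ≥ 3/2. Then there exists a vector μ = (3/2, 1/2, 1/2, ℓ'4, …, ℓ'n), where each 2ℓ'i is an odd integer, such that μ lies in the convex hull of the orbit of λ under the group generated by coordinate permutations and sign changes of an even number of coordinates, and μ − λ ∈ ℤ^n with even coordinate sum. -/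
/-!
The convex hull `H` of a Weyl orbit is invariant under the Weyl group. For two coordinates
`a ≠ b`, the transposition `(a b)` and the sign change of `a` and `b` act on
`(z a + z b, z a - z b)` as independent sign changes, so from `z ∈ H` any point obtained by
replacing `(z a, z b)` with `(x, y)`, where `|x + y| ≤ |z a + z b|` and `|x - y| ≤ |z a - z b|`,
again lies in `H`.

If `ℓ₁ + ℓ₂ < 3`, then `λ = (3/2, 1/2, …, 1/2, ±1/2)` itself is the required `μ`. Otherwise such
pair moves carry `λ` to `(3/2, 1/2, …, 1/2, t)` for both `t = ±1/2`: first the last two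
coordinates become `(1/2, ±1/2)` (`ℓ_{n-1} ± ℓ_n` are integers, not both zero), then the first
two become `(3/2, 3/2)`, then the second and the last become `(1/2, t)`, and finally every
remaining coordinate is lowered to `1/2` against the last one. Exactly one choice of `t` gives
`μ - λ` an even coordinate sum.
-/

open Function Finset

def IsHalfOdd (q : ℚ) : Prop := ∃ k : ℤ, Odd k ∧ q = k / 2

namespace IsHalfOdd

variable {a b : ℚ}

theorem exists_eq_add_half (ha : IsHalfOdd a) : ∃ m : ℤ, a = m + 1 / 2 := by
  obtain ⟨k, ⟨m, rfl⟩, rfl⟩ := ha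
  exact ⟨m, by push_cast; ring⟩

theorem add_intCast (ha : IsHalfOdd a) (m : ℤ) : IsHalfOdd (a + m) := by
  obtain ⟨k, hk, rfl⟩ := ha
  exact ⟨k + 2 * m, hk.add_even (even_two_mul m), by push_cast; ring⟩

theorem exists_add_eq_intCast (ha : IsHalfOdd a) (hb : IsHalfOdd b) : ∃ m : ℤ, a + b = m := by
  obtain ⟨i, rfl⟩ := ha.exists_eq_add_half
  obtain ⟨j, rfl⟩ := hb.exists_eq_add_half
  exact ⟨i + j + 1, by push_cast; ring⟩

theorem exists_sub_eq_intCast (ha : IsHalfOdd a) (hb : IsHalfOdd b) : ∃ m : ℤ, a - b = m := by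
  obtain ⟨i, rfl⟩ := ha.exists_eq_add_half
  obtain ⟨j, rfl⟩ := hb.exists_eq_add_half
  exact ⟨i - j, by push_cast; ring⟩

theorem half_le_abs (ha : IsHalfOdd a) : 1 / 2 ≤ |a| := by
  obtain ⟨m, rfl⟩ := ha.exists_eq_add_half
  rcases le_or_gt 0 m with hm | hm
  · have : (0 : ℚ) ≤ m := by exact_mod_cast hm
    rw [abs_of_nonneg (by linarith)]; linarith
  · have : (m : ℚ) ≤ -1 := by exact_mod_cast Int.le_sub_one_of_lt hm
    rw [abs_of_neg (by linarith)]; linarith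

theorem one_le_abs_add_or_one_le_abs_sub (ha : IsHalfOdd a) (hb : IsHalfOdd b) :
    1 ≤ |a + b| ∨ 1 ≤ |a - b| := by
  obtain ⟨i, rfl⟩ := ha.exists_eq_add_half
  obtain ⟨j, rfl⟩ := hb.exists_eq_add_half
  have hsum : (i : ℚ) + 1 / 2 + (j + 1 / 2) = ((i + j + 1 : ℤ) : ℚ) := by push_cast; ring
  have hsub : (i : ℚ) + 1 / 2 - (j + 1 / 2) = ((i - j : ℤ) : ℚ) := by push_cast; ring
  rw [hsum, hsub, ← Int.cast_abs, ← Int.cast_abs]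
  rcases (by omega : i + j + 1 ≠ 0 ∨ i - j ≠ 0) with h | h
  · exact Or.inl (by exact_mod_cast Int.one_le_abs h)
  · exact Or.inr (by exact_mod_cast Int.one_le_abs h)

theorem eq_of_add_lt_three (ha : IsHalfOdd a) (hb : IsHalfOdd b)
    (ha' : 3 / 2 ≤ a) (hb' : 1 / 2 ≤ b) (hab : a + b < 3) : a = 3 / 2 ∧ b = 1 / 2 := by
  obtain ⟨m, hm⟩ := ha.exists_add_eq_intCast hb
  have : m ≤ 2 := Int.lt_add_one_iff.1 (by exact_mod_cast hm ▸ hab)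
  have : a + b ≤ 2 := hm ▸ (by exact_mod_cast this)
  constructor <;> linarith

end IsHalfOdd

theorem mem_segment_neg_of_abs_le {𝕜 : Type*} [Field 𝕜] [LinearOrder 𝕜] [IsStrictOrderedRing 𝕜]
    {t c : 𝕜} (h : |t| ≤ |c|) : t ∈ segment 𝕜 c (-c) := by
  rw [segment_eq_uIcc, Set.mem_uIcc]
  rcases le_total 0 c with hc | hc
  · rw [abs_of_nonneg hc] at h; exact Or.inr (abs_le.1 h)
  · rw [abs_of_nonpos hc] at h; exact Or.inl (by simpa using abs_le.1 h)

section WeylOrbit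

variable {n : ℕ}

def weylOrbitD (l : Fin n → ℚ) : Set (Fin n → ℚ) :=
  {x : Fin n → ℚ | ∃ σ : Equiv.Perm (Fin n), ∃ ε : Fin n → ℚ,
    (∀ i, ε i = 1 ∨ ε i = -1) ∧
    Even (Finset.univ.filter (fun i => ε i = -1)).card ∧
    x = fun i => ε i * l (σ i)}

theorem even_card_filter_iff_prod_eq_one {ε : Fin n → ℚ} (hε : ∀ i, ε i = 1 ∨ ε i = -1) :
    Even (univ.filter (fun i => ε i = -1)).card ↔ ∏ i, ε i = 1 := by
  have hprod : ∏ i, ε i = ∏ i, if ε i = -1 then (-1 : ℚ) else 1 :=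
    prod_congr rfl fun i _ => by rcases hε i with h | h <;> simp [h]
  rw [hprod, prod_ite, prod_const, prod_const_one, mul_one,
    neg_one_pow_eq_one_iff_even (by norm_num)]

theorem self_mem_weylOrbitD (l : Fin n → ℚ) : l ∈ weylOrbitD l :=
  ⟨1, fun _ => 1, fun _ => Or.inl rfl, by norm_num, by simp⟩

theorem mul_comp_mem_weylOrbitD {l x : Fin n → ℚ} (hx : x ∈ weylOrbitD l) (e : Equiv.Perm (Fin n))
    {η : Fin n → ℚ} (hη : ∀ i, η i = 1 ∨ η i = -1)
    (hηeven : Even (univ.filter (fun i => η i = -1)).card) :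
    (fun i => η i * x (e i)) ∈ weylOrbitD l := by
  obtain ⟨σ, ε, hε, hεeven, rfl⟩ := hx
  have hηε : ∀ i, η i * ε (e i) = 1 ∨ η i * ε (e i) = -1 := fun i => by
    rcases hη i with h | h <;> rcases hε (e i) with h' | h' <;> simp [h, h']
  refine ⟨e.trans σ, fun i => η i * ε (e i), hηε, ?_, by simp [mul_assoc]⟩
  rw [even_card_filter_iff_prod_eq_one hηε, prod_mul_distrib, Equiv.prod_comp e ε,
    (even_card_filter_iff_prod_eq_one hη).1 hηeven,
    (even_card_filter_iff_prod_eq_one hε).1 hεeven, one_mul]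

theorem mul_comp_mem_convexHull_weylOrbitD {l z : Fin n → ℚ}
    (hz : z ∈ convexHull ℚ (weylOrbitD l)) (e : Equiv.Perm (Fin n))
    {η : Fin n → ℚ} (hη : ∀ i, η i = 1 ∨ η i = -1)
    (hηeven : Even (univ.filter (fun i => η i = -1)).card) :
    (fun i => η i * z (e i)) ∈ convexHull ℚ (weylOrbitD l) := by
  let f : (Fin n → ℚ) →ₗ[ℚ] (Fin n → ℚ) := LinearMap.pi fun i => η i • LinearMap.proj (e i)
  have hf : f '' weylOrbitD l ⊆ weylOrbitD l := by
    rintro _ ⟨x, hx, rfl⟩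
    exact mul_comp_mem_weylOrbitD hx e hη hηeven
  exact convexHull_mono hf (f.image_convexHull _ ▸ Set.mem_image_of_mem f hz)

end WeylOrbit

section Moves

variable {n : ℕ} {l z : Fin n → ℚ} {a b : Fin n}

theorem update_swap_mem_convexHull (hz : z ∈ convexHull ℚ (weylOrbitD l)) (a b : Fin n) :
    update (update z a (z b)) b (z a) ∈ convexHull ℚ (weylOrbitD l) := by
  convert mul_comp_mem_convexHull_weylOrbitD hz (Equiv.swap a b) (η := fun _ => 1)
    (fun _ => Or.inl rfl) (by norm_num) using 1
  funext i
  simp only [update_apply, Equiv.swap_apply_def]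
  split_ifs <;> simp_all

theorem update_neg_swap_mem_convexHull (hz : z ∈ convexHull ℚ (weylOrbitD l)) (hab : a ≠ b) :
    update (update z a (-z b)) b (-z a) ∈ convexHull ℚ (weylOrbitD l) := by
  have hfilter : univ.filter (fun i => (if i = a ∨ i = b then (-1 : ℚ) else 1) = -1) = {a, b} := by
    ext i
    simp only [mem_filter, mem_univ, true_and, mem_insert, mem_singleton]
    split_ifs with h <;> norm_num [h]
  convert mul_comp_mem_convexHull_weylOrbitD hz (Equiv.swap a b)
    (η := fun i => if i = a ∨ i = b then -1 else 1) (fun i => by split_ifs <;> simp)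
    (by rw [hfilter, card_pair hab]; decide) using 1
  funext i
  simp only [update_apply, Equiv.swap_apply_def]
  split_ifs <;> simp_all

theorem update_update_mem_of_add_eq_convexHull (hz : z ∈ convexHull ℚ (weylOrbitD l)) (hab : a ≠ b)
    {x y : ℚ} (hadd : x + y = z a + z b) (hsub : |x - y| ≤ |z a - z b|) :
    update (update z a x) b y ∈ convexHull ℚ (weylOrbitD l) := by
  obtain ⟨p, q, hp, hq, hpq, hpqxy⟩ := mem_segment_neg_of_abs_le hsub
  simp only [smul_eq_mul] at hpqxy
  convert convex_convexHull ℚ _ hz (update_swap_mem_convexHull hz a b) hp hq hpq using 1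
  funext i
  simp only [Pi.add_apply, Pi.smul_apply, smul_eq_mul, update_apply]
  split_ifs with hib hia
  · subst hib; linear_combination (hadd + hpqxy - (z a + z i) * hpq) / 2
  · subst hia; linear_combination (hadd - hpqxy - (z i + z b) * hpq) / 2
  · linear_combination -(z i) * hpq

theorem update_update_mem_of_sub_eq_convexHull (hz : z ∈ convexHull ℚ (weylOrbitD l)) (hab : a ≠ b)
    {x y : ℚ} (hsub : x - y = z a - z b) (hadd : |x + y| ≤ |z a + z b|) :
    update (update z a x) b y ∈ convexHull ℚ (weylOrbitD l) := by
  obtain ⟨p, q, hp, hq, hpq, hpqxy⟩ := mem_segment_neg_of_abs_le hadd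
  simp only [smul_eq_mul] at hpqxy
  convert convex_convexHull ℚ _ hz (update_neg_swap_mem_convexHull hz hab) hp hq hpq using 1
  funext i
  simp only [Pi.add_apply, Pi.smul_apply, smul_eq_mul, update_apply]
  split_ifs with hib hia
  · subst hib; linear_combination (-hpqxy - hsub + (z a - z i) * hpq) / 2
  · subst hia; linear_combination (-hpqxy + hsub - (z i - z b) * hpq) / 2
  · linear_combination -(z i) * hpq

theorem update_update_mem_convexHull (hz : z ∈ convexHull ℚ (weylOrbitD l)) (hab : a ≠ b) {x y : ℚ}
    (hadd : |x + y| ≤ |z a + z b|) (hsub : |x - y| ≤ |z a - z b|) :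
    update (update z a x) b y ∈ convexHull ℚ (weylOrbitD l) := by
  set x' := (z a + z b + (x - y)) / 2
  set y' := (z a + z b - (x - y)) / 2
  have hw : update (update z a x') b y' ∈ convexHull ℚ (weylOrbitD l) :=
    update_update_mem_of_add_eq_convexHull hz hab (by ring) (by rwa [show x' - y' = x - y by ring])
  have hwa : update (update z a x') b y' a = x' := by rw [update_of_ne hab, update_self]
  have hwb : update (update z a x') b y' b = y' := by rw [update_self]
  convert update_update_mem_of_sub_eq_convexHull hw hab (x := x) (y := y)
    (by rw [hwa, hwb]; ring) (by rwa [hwa, hwb, show x' + y' = z a + z b by ring]) using 1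
  simp only [update_idem, update_comm hab]

theorem update_half_mem_convexHull (hz : z ∈ convexHull ℚ (weylOrbitD l)) {j : Fin n} (hjb : j ≠ b)
    (hb : |z b| = 1 / 2) (hj : 1 / 2 ≤ z j) :
    update z j (1 / 2) ∈ convexHull ℚ (weylOrbitD l) := by
  have key : |1 / 2 + z b| ≤ |z j + z b| ∧ |1 / 2 - z b| ≤ |z j - z b| := by
    rcases (abs_eq (by norm_num : (0 : ℚ) ≤ 1 / 2)).1 hb with h | h
    · rw [h, abs_of_nonneg (by linarith : 0 ≤ z j + 1 / 2)]; norm_num; linarith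
    · rw [h, abs_of_nonneg (by linarith : 0 ≤ z j - -(1 / 2))]; norm_num; linarith
  have h := update_update_mem_convexHull hz hjb key.1 key.2
  rwa [← update_of_ne hjb.symm (1 / 2) z, update_eq_self] at h

theorem piecewise_half_mem_convexHull (hz : z ∈ convexHull ℚ (weylOrbitD l)) (hb : |z b| = 1 / 2)
    (S : Finset (Fin n)) (hbS : b ∉ S) (hS : ∀ j ∈ S, 1 / 2 ≤ z j) :
    S.piecewise (fun _ => 1 / 2) z ∈ convexHull ℚ (weylOrbitD l) := by
  induction S using Finset.induction_on with
  | empty => simpa using hz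
  | insert j S hjS ih =>
    have hbS' : b ∉ S := fun h => hbS (mem_insert_of_mem h)
    rw [piecewise_insert]
    refine update_half_mem_convexHull (ih hbS' fun i hi => hS i (mem_insert_of_mem hi))
      (ne_of_mem_of_not_mem (mem_insert_self j S) hbS) ?_ ?_
    · rwa [piecewise_eq_of_notMem _ _ _ hbS']
    · rw [piecewise_eq_of_notMem _ _ _ hjS]; exact hS j (mem_insert_self j S)

theorem update_update_const_mem_convexHull (hz : z ∈ convexHull ℚ (weylOrbitD l))
    {i₀ i₁ : Fin n} (h01 : i₀ ≠ i₁) (h0b : i₀ ≠ b) (h1b : i₁ ≠ b) (ha0 : a ≠ i₀) (ha1 : a ≠ i₁)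
    (hab : a ≠ b) (hsum : 3 ≤ z i₀ + z i₁) (hpair : 1 ≤ |z a + z b| ∨ 1 ≤ |z a - z b|)
    (hrest : ∀ j, j ≠ i₀ → j ≠ i₁ → j ≠ a → j ≠ b → 1 / 2 ≤ z j) {t : ℚ} (ht : |t| = 1 / 2) :
    update (update (fun _ => 1 / 2) i₀ (3 / 2)) b t ∈ convexHull ℚ (weylOrbitD l) := by
  obtain ⟨e, he, hw₁⟩ : ∃ e : ℚ, |e| = 1 / 2 ∧
      update (update z a (1 / 2)) b e ∈ convexHull ℚ (weylOrbitD l) := by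
    rcases hpair with h | h
    · exact ⟨1 / 2, by norm_num,
        update_update_mem_convexHull hz hab (by norm_num; linarith) (by norm_num)⟩
    · exact ⟨-(1 / 2), by norm_num,
        update_update_mem_convexHull hz hab (by norm_num) (by norm_num; linarith)⟩
  set w₁ := update (update z a (1 / 2)) b e
  have hw₂ := update_update_mem_convexHull hw₁ h01 (x := 3 / 2) (y := 3 / 2)
    (by simpa [w₁, update_of_ne ha0.symm, update_of_ne ha1.symm, update_of_ne h0b,
      update_of_ne h1b, abs_of_nonneg (by linarith : (0 : ℚ) ≤ z i₀ + z i₁)] using hsum)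
    (by norm_num)
  set w₂ := update (update w₁ i₀ (3 / 2)) i₁ (3 / 2)
  have hw₂i₁ : w₂ i₁ = 3 / 2 := by simp [w₂]
  have hw₂b : w₂ b = e := by simp [w₂, w₁, update_of_ne h0b.symm, update_of_ne h1b.symm]
  have hstep : |1 / 2 + t| ≤ |3 / 2 + e| ∧ |1 / 2 - t| ≤ |3 / 2 - e| := by
    rcases (abs_eq (by norm_num : (0 : ℚ) ≤ 1 / 2)).1 he with rfl | rfl <;>
    rcases (abs_eq (by norm_num : (0 : ℚ) ≤ 1 / 2)).1 ht with rfl | rfl <;> norm_num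
  have hw₃ := update_update_mem_convexHull hw₂ h1b (x := 1 / 2) (y := t)
    (by rw [hw₂i₁, hw₂b]; exact hstep.1) (by rw [hw₂i₁, hw₂b]; exact hstep.2)
  set w₃ := update (update w₂ i₁ (1 / 2)) b t
  have hw₄ := piecewise_half_mem_convexHull hw₃ (b := b) (by simpa [w₃] using ht)
    {i₀, i₁, b}ᶜ (by simp) fun j hj => by
      simp only [mem_compl, mem_insert, mem_singleton, not_or] at hj
      obtain ⟨hj0, hj1, hjb⟩ := hj
      by_cases hja : j = a
      · subst hja; simp [w₃, w₂, w₁, hj0, hj1, hjb]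
      · simpa [w₃, w₂, w₁, hj0, hj1, hjb, hja] using hrest j hj0 hj1 hja hjb
  convert hw₄ using 1
  funext j
  by_cases hj0 : j = i₀ <;> by_cases hj1 : j = i₁ <;> by_cases hjb : j = b <;>
    simp_all [w₃, w₂, w₁]

end Moves

theorem exists_update_update_const_sub_eq_intCast_even {n : ℕ} {l : Fin n → ℚ}
    (hl : ∀ i, IsHalfOdd (l i)) (i₀ b : Fin n) :
    ∃ t : ℚ, |t| = 1 / 2 ∧ ∃ c : Fin n → ℤ,
      (∀ i, update (update (fun _ => (1 / 2 : ℚ)) i₀ (3 / 2)) b t i - l i = c i) ∧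
      Even (∑ i, c i) := by
  set ν : Fin n → ℚ := update (update (fun _ => (1 / 2 : ℚ)) i₀ (3 / 2)) b (1 / 2)
  have hν : ∀ i, IsHalfOdd (ν i) := fun i => by
    have : ν i = 3 / 2 ∨ ν i = 1 / 2 := by simp only [ν, update_apply]; split_ifs <;> simp
    rcases this with h | h <;> rw [h]
    exacts [⟨3, by decide, by norm_num⟩, ⟨1, odd_one, by norm_num⟩]
  choose d hd using fun i => (hν i).exists_sub_eq_intCast (hl i)
  by_cases hev : Even (∑ i, d i)
  · exact ⟨1 / 2, by norm_num, d, hd, hev⟩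
  refine ⟨-(1 / 2), by norm_num, d - Pi.single b (1 : ℤ), fun i => ?_, ?_⟩
  · have := hd i
    rcases eq_or_ne i b with rfl | hi
    · simp only [ν, update_self, Pi.sub_apply, Pi.single_eq_same] at this ⊢
      push_cast; linarith
    · simpa [ν, update_of_ne hi, Pi.single_eq_of_ne hi] using this
  · simp only [Pi.sub_apply]
    rw [sum_sub_distrib, sum_pi_single', if_pos (mem_univ b)]
    exact (Int.not_even_iff_odd.1 hev).sub_odd odd_one

/-- Let `n ≥ 4` and let `λ = (ℓ1,…,ℓn) ∈ ℚ^n` be such that each `2ℓi` is an odd integer,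
`ℓ1 ≥ ℓ2 ≥ … ≥ ℓ_{n−1} ≥ |ℓn|`, and `ℓ1 ≥ 3/2`. Then there exists a vector
`μ = (3/2, 1/2, 1/2, ℓ'4, …, ℓ'n)` with each `2ℓ'i` an odd integer, such that `μ` lies in
the convex hull of the orbit of `λ` under the group generated by coordinate permutations
and sign changes of an even number of coordinates, and `μ − λ` is an integer vector with
even coordinate sum. -/
theorem stmt12 {n : ℕ} (hn : 4 ≤ n) (l : Fin n → ℚ)
    (hhalf : ∀ i, ∃ k : ℤ, Odd k ∧ l i = (k : ℚ) / 2)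
    (hmono : ∀ i j : Fin n, i ≤ j → (j : ℕ) < n - 1 → l j ≤ l i)
    (hlast : |l ⟨n - 1, by omega⟩| ≤ l ⟨n - 2, by omega⟩)
    (hl1 : 3 / 2 ≤ l ⟨0, by omega⟩) :
    ∃ μ : Fin n → ℚ,
      μ ⟨0, by omega⟩ = 3 / 2 ∧ μ ⟨1, by omega⟩ = 1 / 2 ∧ μ ⟨2, by omega⟩ = 1 / 2 ∧
      (∀ i, ∃ k : ℤ, Odd k ∧ μ i = (k : ℚ) / 2) ∧
      μ ∈ convexHull ℚ {x : Fin n → ℚ | ∃ σ : Equiv.Perm (Fin n), ∃ ε : Fin n → ℚ,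
        (∀ i, ε i = 1 ∨ ε i = -1) ∧
        Even (Finset.univ.filter (fun i => ε i = -1)).card ∧
        x = fun i => ε i * l (σ i)} ∧
      ∃ c : Fin n → ℤ, (∀ i, μ i - l i = (c i : ℚ)) ∧ Even (∑ i, c i) := by
  replace hhalf : ∀ i, IsHalfOdd (l i) := hhalf
  set i₀ : Fin n := ⟨0, by omega⟩
  set i₁ : Fin n := ⟨1, by omega⟩
  set i₂ : Fin n := ⟨2, by omega⟩
  set a : Fin n := ⟨n - 2, by omega⟩
  set b : Fin n := ⟨n - 1, by omega⟩
  have hl : l ∈ convexHull ℚ (weylOrbitD l) := subset_convexHull ℚ _ (self_mem_weylOrbitD l)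
  have hge : ∀ j, j ≠ b → 1 / 2 ≤ l j := fun j hjb =>
    have : (j : ℕ) ≠ n - 1 := Fin.val_ne_of_ne hjb
    ((hhalf b).half_le_abs.trans hlast).trans (hmono j a (Fin.mk_le_mk.2 (by omega))
      (by simp [a]; omega))
  rcases le_or_gt 3 (l i₀ + l i₁) with hsum | hsum
  · obtain ⟨t, ht, c, hc, hceven⟩ := exists_update_update_const_sub_eq_intCast_even hhalf i₀ b
    refine ⟨_, ?_, ?_, ?_, fun i => ?_, ?_, c, hc, hceven⟩
    · simp [i₀, b, Fin.ext_iff, show 0 ≠ n - 1 by omega]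
    · simp [i₀, i₁, b, Fin.ext_iff, show 1 ≠ n - 1 by omega]
    · simp [i₀, i₂, b, Fin.ext_iff, show 2 ≠ n - 1 by omega]
    · show IsHalfOdd _
      simpa [← hc i] using (hhalf i).add_intCast (c i)
    · refine update_update_const_mem_convexHull hl (a := a) ?_ ?_ ?_ ?_ ?_ ?_ hsum
        ((hhalf a).one_le_abs_add_or_one_le_abs_sub (hhalf b)) (fun j _ _ _ hjb => hge j hjb) ht
        <;> simp [i₀, i₁, a, b, Fin.ext_iff] <;> omega
  · have hb : ∀ k (hk : k < n - 1), (⟨k, by omega⟩ : Fin n) ≠ b := fun k hk =>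
      Fin.ne_of_val_ne (by simp [b]; omega)
    obtain ⟨h0, h1⟩ := (hhalf i₀).eq_of_add_lt_three (hhalf i₁) hl1 (hge i₁ (hb 1 (by omega))) hsum
    have h2 : l i₂ = 1 / 2 :=
      le_antisymm (h1 ▸ hmono i₁ i₂ (Fin.mk_le_mk.2 (by omega)) (by simp [i₂]; omega))
        (hge i₂ (hb 2 (by omega)))
    exact ⟨l, h0, h1, h2, hhalf, hl, 0, by simp, by simp⟩
end
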